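/- arXiv:gr-qc/0508078 — 3 statements merged into one kernel-verified Lean document; each statement's English description precedes it below -/
import Mathlib

section
/- Let S be a symmetric bilinear form on ℝ⁴. Then the following are equivalent: (1) S(V,W) ≥ 0 for all future-pointing timelike vectors V and W; (2) S(V,V) ≥ 0 for every timelike vector V, and for every timelike vector V the vector P(V) ∈ ℝ⁴ determined by η(P(V),W) = S(V,W) for all W ∈ ℝ⁴ (the η-raising of the covector S(V,·)) is non-spacelike. -/
noncomputable section

/-- The Minkowski bilinear form on ℝ⁴, signature (−,+,+,+). -/
def eta (V W : Fin 4 → ℝ) : ℝ :=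
  -(V 0 * W 0) + V 1 * W 1 + V 2 * W 2 + V 3 * W 3

def Timelike (V : Fin 4 → ℝ) : Prop := eta V V < 0

def NonSpacelike (V : Fin 4 → ℝ) : Prop := eta V V ≤ 0

def FuturePointing (V : Fin 4 → ℝ) : Prop := 0 < V 0

/-- The η-raising of the covector `W ↦ S V W`: the unique vector `P` with
`eta P W = S V W` for all `W`. -/
def etaRaise (S : (Fin 4 → ℝ) →ₗ[ℝ] (Fin 4 → ℝ) →ₗ[ℝ] ℝ) (V : Fin 4 → ℝ) : Fin 4 → ℝ :=
  fun i => if i = 0 then -(S V (Pi.single 0 1)) else S V (Pi.single i 1)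

private lemma eta_raise (S : (Fin 4 → ℝ) →ₗ[ℝ] (Fin 4 → ℝ) →ₗ[ℝ] ℝ) (V W : Fin 4 → ℝ) :
    eta (etaRaise S V) W = S V W := by
  have hW : W = W 0 • (Pi.single 0 1 : Fin 4 → ℝ) + W 1 • (Pi.single 1 1 : Fin 4 → ℝ)
      + W 2 • (Pi.single 2 1 : Fin 4 → ℝ) + W 3 • (Pi.single 3 1 : Fin 4 → ℝ) := by
    funext i; fin_cases i <;> simp
  conv_rhs => rw [hW]
  simp only [map_add, map_smul, smul_eq_mul, eta, etaRaise]
  have h1 : ((1:Fin 4) = 0) = False := by decide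
  have h2 : ((2:Fin 4) = 0) = False := by decide
  have h3 : ((3:Fin 4) = 0) = False := by decide
  simp only [h1, h2, h3, if_false, if_true]
  ring

private lemma cs3 (a b c x y z : ℝ) :
    (a*x + b*y + c*z)^2 ≤ (a^2 + b^2 + c^2) * (x^2 + y^2 + z^2) := by
  nlinarith [sq_nonneg (a*y - b*x), sq_nonneg (a*z - c*x), sq_nonneg (b*z - c*y)]

private lemma etaRaise_neg (S : (Fin 4 → ℝ) →ₗ[ℝ] (Fin 4 → ℝ) →ₗ[ℝ] ℝ) (V : Fin 4 → ℝ) :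
    etaRaise S (-V) = -(etaRaise S V) := by
  funext i
  simp only [etaRaise, map_neg, LinearMap.neg_apply, Pi.neg_apply]
  split <;> ring

/-- Main step of the forward direction, for future-pointing `V`. -/
private lemma forward_aux (S : (Fin 4 → ℝ) →ₗ[ℝ] (Fin 4 → ℝ) →ₗ[ℝ] ℝ) (V : Fin 4 → ℝ)
    (h : ∀ W : Fin 4 → ℝ, Timelike W → FuturePointing W → 0 ≤ S V W)
    (hV : Timelike V) (hVf : FuturePointing V) :
    0 ≤ S V V ∧ NonSpacelike (etaRaise S V) := by
  have hs : ∀ W, Timelike W → FuturePointing W → 0 ≤ eta (etaRaise S V) W := by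
    intro W hW hWf
    rw [eta_raise]; exact h W hW hWf
  refine ⟨h V hV hVf, ?_⟩
  set P := etaRaise S V with hP
  -- from W = (1,0,0,0):  P 0 ≤ 0
  have hm : 0 ≤ -(P 0) := by
    have ht : Timelike ![(1:ℝ),0,0,0] := by simp [Timelike, eta]
    have hf : FuturePointing ![(1:ℝ),0,0,0] := by simp [FuturePointing]
    have := hs ![(1:ℝ),0,0,0] ht hf
    simp [eta] at this
    linarith
  set m : ℝ := -(P 0) with hmdef
  set a : ℝ := P 1
  set b : ℝ := P 2
  set c : ℝ := P 3
  by_contra hpp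
  rw [NonSpacelike, not_le] at hpp
  have hpp' : m^2 < a^2 + b^2 + c^2 := by
    simp only [eta] at hpp; nlinarith
  set r : ℝ := Real.sqrt (a^2 + b^2 + c^2) with hrdef
  have hr0 : 0 ≤ r := Real.sqrt_nonneg _
  have hr2 : r^2 = a^2 + b^2 + c^2 := Real.sq_sqrt (by positivity)
  have hmr : m < r := by nlinarith
  have hrpos : 0 < r := lt_of_le_of_lt hm hmr
  -- the witness vector
  have ht : Timelike ![(3*r - m)/2, -a, -b, -c] := by
    simp only [Timelike, eta]
    simp
    nlinarith
  have hf : FuturePointing ![(3*r - m)/2, -a, -b, -c] := by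
    simp only [FuturePointing]
    simp
    linarith
  have hcon := hs ![(3*r - m)/2, -a, -b, -c] ht hf
  simp only [eta] at hcon
  simp at hcon
  nlinarith

/-- Lemma 3.1: for a symmetric bilinear form `S` on ℝ⁴, nonnegativity on pairs of
future-pointing timelike vectors is equivalent to: `S(V,V) ≥ 0` for every timelike `V` and
the η-raising of `S(V,·)` is non-spacelike for every timelike `V`. -/
theorem dominant_energy_condition_equiv
    (S : (Fin 4 → ℝ) →ₗ[ℝ] (Fin 4 → ℝ) →ₗ[ℝ] ℝ) (hS : ∀ V W, S V W = S W V) :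
    (∀ V W : Fin 4 → ℝ, Timelike V → FuturePointing V → Timelike W → FuturePointing W →
        0 ≤ S V W) ↔
    (∀ V : Fin 4 → ℝ, Timelike V → 0 ≤ S V V ∧ NonSpacelike (etaRaise S V)) := by
  constructor
  · intro h V hV
    have hV0 : V 0 ≠ 0 := by
      intro h0
      have := hV
      simp only [Timelike, eta, h0] at this
      nlinarith
    rcases hV0.lt_or_gt with hneg | hpos
    · -- V past-pointing: work with -V
      have hVt : Timelike (-V) := by
        simpa [Timelike, eta] using hV
      have hVf : FuturePointing (-V) := by
        simp only [FuturePointing, Pi.neg_apply]; linarith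
      have key := forward_aux S (-V) (fun W hW hWf => h (-V) W hVt hVf hW hWf) hVt hVf
      constructor
      · have : S (-V) (-V) = S V V := by simp
        linarith [key.1, this.symm ▸ key.1]
      · have h2 := key.2
        rw [etaRaise_neg] at h2
        simpa [NonSpacelike, eta] using h2
    · exact forward_aux S V (fun W hW hWf => h V W hV hpos hW hWf) hV hpos
  · intro h V W hV hVf hW hWf
    obtain ⟨h1, h2⟩ := h V hV
    rw [← eta_raise]
    set P := etaRaise S V with hP
    have hPV : 0 ≤ eta P V := by rw [eta_raise]; exact h1
    simp only [NonSpacelike, eta] at h2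
    have hVt : V 1 ^ 2 + V 2 ^ 2 + V 3 ^ 2 < V 0 ^ 2 := by
      simp only [Timelike, eta] at hV; nlinarith
    have hWt : W 1 ^ 2 + W 2 ^ 2 + W 3 ^ 2 < W 0 ^ 2 := by
      simp only [Timelike, eta] at hW; nlinarith
    have hp : P 1 ^ 2 + P 2 ^ 2 + P 3 ^ 2 ≤ P 0 ^ 2 := by nlinarith
    -- Step 1: P 0 ≤ 0
    have hP0 : P 0 ≤ 0 := by
      by_contra hc
      push_neg at hc
      simp only [eta] at hPV
      have hcs := cs3 (P 1) (P 2) (P 3) (V 1) (V 2) (V 3)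
      nlinarith [mul_le_mul_of_nonneg_right hp
          (by positivity : (0:ℝ) ≤ V 1 ^ 2 + V 2 ^ 2 + V 3 ^ 2),
        mul_lt_mul_of_pos_left hVt (pow_pos hc 2),
        mul_pos hc hVf,
        mul_self_le_mul_self (le_of_lt (mul_pos hc hVf))
          (by linarith : P 0 * V 0 ≤ P 1 * V 1 + P 2 * V 2 + P 3 * V 3)]
    -- Step 2: conclude
    simp only [eta]
    by_contra hc
    push_neg at hc
    have hcs := cs3 (P 1) (P 2) (P 3) (W 1) (W 2) (W 3)
    nlinarith [mul_nonneg (neg_nonneg.mpr hP0) hWf.le, sq_nonneg (P 0 * W 0),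
      mul_nonneg (mul_nonneg (neg_nonneg.mpr hP0) (neg_nonneg.mpr hP0)) (mul_nonneg hWf.le hWf.le)]

end
end

section
/- Let f : ℝ³ → ℝ be nonnegative and measurable with v ↦ (1 + |v|²) f(v) Lebesgue integrable. For v ∈ ℝ³ let p(v) := (√(1 + |v|²), v¹, v², v³) ∈ ℝ⁴ (a point of the forward unit mass shell η(p,p) = −1, p⁰ > 0). Then for all future-pointing timelike vectors V, W ∈ ℝ⁴: ∫_{ℝ³} η(p(v),V) · η(p(v),W) · f(v) / √(1 + |v|²) dv ≥ 0. -/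
open MeasureTheory

noncomputable section

/-- The point of the forward unit mass shell over the momentum `v ∈ ℝ³`:
`p(v) = (√(1+|v|²), v¹, v², v³)`. -/
def massShell (v : EuclideanSpace ℝ (Fin 3)) : Fin 4 → ℝ :=
  ![Real.sqrt (1 + ‖v‖ ^ 2), v 0, v 1, v 2]

lemma eta_massShell_nonpos (v : EuclideanSpace ℝ (Fin 3)) (V : Fin 4 → ℝ)
    (hV : Timelike V) (hVf : FuturePointing V) : eta (massShell v) V ≤ 0 := by
  have hnorm : ‖v‖ ^ 2 = v 0 ^ 2 + v 1 ^ 2 + v 2 ^ 2 := by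
    rw [EuclideanSpace.norm_eq, Real.sq_sqrt (by positivity)]
    simp [Fin.sum_univ_three, sq_abs]
  set s := Real.sqrt (1 + ‖v‖ ^ 2) with hs
  have hs2 : s ^ 2 = 1 + ‖v‖ ^ 2 := Real.sq_sqrt (by positivity)
  have hspos : 0 < s := Real.sqrt_pos.mpr (by positivity)
  simp only [eta, massShell, Matrix.cons_val_zero, Matrix.cons_val_one, Matrix.head_cons,
    Matrix.cons_val_two, Matrix.tail_cons, Matrix.cons_val_three] at *
  unfold Timelike eta at hV
  unfold FuturePointing at hVf
  rw [hnorm] at hs2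
  nlinarith [sq_nonneg (v 0 * V 2 - v 1 * V 1), sq_nonneg (v 0 * V 3 - v 2 * V 1),
    sq_nonneg (v 1 * V 3 - v 2 * V 2), mul_pos hspos hVf,
    sq_nonneg (s * V 0 + (v 0 * V 1 + v 1 * V 2 + v 2 * V 3)), sq_nonneg (V 1), sq_nonneg (V 0)]

/-- Pointwise dominant energy condition for the Vlasov stress-energy tensor: for a
nonnegative measurable `f` with `(1+|v|²) f(v)` integrable and for all future-pointing
timelike `V, W`, the integral `∫ η(p(v),V) η(p(v),W) f(v)/√(1+|v|²) dv` is nonnegative. -/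
theorem vlasov_dominant_energy_condition
    (f : EuclideanSpace ℝ (Fin 3) → ℝ) (hf_meas : Measurable f)
    (hf_nonneg : ∀ v, 0 ≤ f v)
    (hf_int : Integrable (fun v : EuclideanSpace ℝ (Fin 3) => (1 + ‖v‖ ^ 2) * f v))
    (V W : Fin 4 → ℝ) (hV : Timelike V) (hVf : FuturePointing V)
    (hW : Timelike W) (hWf : FuturePointing W) :
    0 ≤ ∫ v : EuclideanSpace ℝ (Fin 3),
        eta (massShell v) V * eta (massShell v) W * f v / Real.sqrt (1 + ‖v‖ ^ 2) := by
  apply integral_nonneg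
  intro v
  have h1 := eta_massShell_nonpos v V hV hVf
  have h2 := eta_massShell_nonpos v W hW hWf
  have : 0 < Real.sqrt (1 + ‖v‖ ^ 2) := Real.sqrt_pos.mpr (by positivity)
  exact div_nonneg (mul_nonneg (mul_nonneg_of_nonpos_of_nonpos h1 h2) (hf_nonneg v)) this.le
end
end

section
/- Let γ ∈ (0,1], q ∈ ℝ, t ≥ 0, r₀ ≥ 0, B ≥ 0, Q ≥ 1, and set R := r₀ + t/√γ. Let λ : (0,∞) → ℝ be measurable with 0 ≤ λ(s) and e^{2λ(s)} ≤ Q for all s, and let M : (0,∞) → ℝ be measurable with 0 ≤ M(s) ≤ B for all s and M(s) = 0 for s > R. Define e(r) := (q/r²) γ^{3/2} e^{−λ(r)} ∫₀^r s² e^{λ(s)} M(s) ds. Then for every r > 0: |e(r)| ≤ (|q| B / 3) Q^{1/2} (r₀ + t) · γ. -/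
open MeasureTheory Real

noncomputable section

/-- The spherically symmetric electric field obtained by integrating the Maxwell
constraint `∂_r(r²e^{λ}e) = qr²γ^{3/2}e^{λ}M` with `e(0) = 0`:
`e(r) = (q/r²) γ^{3/2} e^{−λ(r)} ∫₀^r s² e^{λ(s)} M(s) ds`. -/
def radialField (γ q : ℝ) (lam M : ℝ → ℝ) (r : ℝ) : ℝ :=
  (q / r ^ 2) * γ ^ ((3 : ℝ) / 2) * Real.exp (-lam r) *
    ∫ s in Set.Ioo (0 : ℝ) r, s ^ 2 * Real.exp (lam s) * M s

/-- The key order-γ estimate for the electric field in the proof of the non-relativistic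
limit theorem: `|e(r)| ≤ (|q|B/3) Q^{1/2} (r₀+t) γ` for all `r > 0`. -/
theorem electric_field_order_gamma (γ q t r0 B Q : ℝ)
    (hγ : γ ∈ Set.Ioc (0 : ℝ) 1) (ht : 0 ≤ t) (hr0 : 0 ≤ r0) (hB : 0 ≤ B) (hQ : 1 ≤ Q)
    (lam M : ℝ → ℝ) (hlam_meas : Measurable lam) (hM_meas : Measurable M)
    (hlam_nonneg : ∀ s, 0 ≤ lam s)
    (hlam_bd : ∀ s, Real.exp (2 * lam s) ≤ Q)
    (hM_nonneg : ∀ s, 0 ≤ M s)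
    (hM_bd : ∀ s, M s ≤ B)
    (hM_supp : ∀ s, r0 + t / Real.sqrt γ < s → M s = 0) :
    ∀ r > (0 : ℝ),
      |radialField γ q lam M r| ≤ (|q| * B / 3) * Real.sqrt Q * (r0 + t) * γ := by
  obtain ⟨hγ0, hγ1⟩ := hγ
  intro r hr
  set R : ℝ := r0 + t / Real.sqrt γ with hR
  have hsγ : 0 < Real.sqrt γ := Real.sqrt_pos.mpr hγ0
  have hR0 : 0 ≤ R := by positivity
  set f : ℝ → ℝ := fun s => s ^ 2 * Real.exp (lam s) * M s with hf
  set C : ℝ := Real.sqrt Q * B with hC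
  have hQ0 : 0 ≤ Real.sqrt Q := Real.sqrt_nonneg Q
  have hC0 : 0 ≤ C := mul_nonneg hQ0 hB
  have hexp : ∀ s, Real.exp (lam s) ≤ Real.sqrt Q := by
    intro s
    have h1 : Real.exp (2 * lam s) = (Real.exp (lam s)) ^ 2 := by
      rw [two_mul, Real.exp_add, sq]
    have := Real.sqrt_le_sqrt (hlam_bd s)
    rwa [h1, Real.sqrt_sq (Real.exp_nonneg _)] at this
  have hf_nonneg : ∀ s, 0 ≤ f s := fun s =>
    mul_nonneg (mul_nonneg (sq_nonneg s) (Real.exp_nonneg _)) (hM_nonneg s)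
  have hf_bd : ∀ s, f s ≤ C * s ^ 2 := by
    intro s
    calc f s ≤ s ^ 2 * Real.sqrt Q * B := by
          apply mul_le_mul (mul_le_mul_of_nonneg_left (hexp s) (sq_nonneg s)) (hM_bd s)
            (hM_nonneg s) (by positivity)
      _ = C * s ^ 2 := by ring
  have hf_meas : Measurable f := by
    exact ((measurable_id.pow_const 2).mul (hlam_meas.exp)).mul hM_meas
  set m : ℝ := min r R with hm
  have hm0 : 0 ≤ m := le_min hr.le hR0
  have hmr : m ≤ r := min_le_left _ _
  have hmR : m ≤ R := min_le_right _ _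
  -- integrability of f on Ioc 0 m
  have hint : IntegrableOn f (Set.Ioc 0 m) := by
    refine Measure.integrableOn_of_bounded (M := C * m ^ 2) (measure_Ioc_lt_top).ne
      hf_meas.aestronglyMeasurable ?_
    filter_upwards [ae_restrict_mem measurableSet_Ioc] with s hs
    rw [Real.norm_eq_abs, abs_of_nonneg (hf_nonneg s)]
    calc f s ≤ C * s ^ 2 := hf_bd s
      _ ≤ C * m ^ 2 := by
          apply mul_le_mul_of_nonneg_left _ hC0
          exact pow_le_pow_left₀ hs.1.le hs.2 2
  -- reduce integral to Ioc 0 m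
  have hI : (∫ s in Set.Ioo (0:ℝ) r, f s) = ∫ s in Set.Ioc (0:ℝ) m, f s := by
    rw [← MeasureTheory.integral_Ioc_eq_integral_Ioo]
    apply setIntegral_eq_of_subset_of_forall_diff_eq_zero measurableSet_Ioc
      (Set.Ioc_subset_Ioc_right hmr)
    intro x hx
    obtain ⟨⟨hx0, hxr⟩, hxm⟩ := hx
    have hxR : R < x := by
      by_contra h
      exact hxm ⟨hx0, le_min hxr (not_lt.mp h)⟩
    simp [hf, hM_supp x hxR]
  -- bound the integral
  have hint2 : IntegrableOn (fun s => C * s ^ 2) (Set.Ioc (0:ℝ) m) := by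
    apply Integrable.const_mul
    exact (continuous_pow 2).integrableOn_Ioc
  have hIbound : (∫ s in Set.Ioc (0:ℝ) m, f s) ≤ C * (m ^ 3 / 3) := by
    have h1 : (∫ s in Set.Ioc (0:ℝ) m, f s) ≤ ∫ s in Set.Ioc (0:ℝ) m, C * s ^ 2 := by
      apply setIntegral_mono_on hint hint2 measurableSet_Ioc
      intro s _; exact hf_bd s
    have h2 : (∫ s in Set.Ioc (0:ℝ) m, C * s ^ 2) = C * (m ^ 3 / 3) := by
      rw [MeasureTheory.integral_const_mul, ← intervalIntegral.integral_of_le hm0,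
        integral_pow]
      norm_num
    linarith
  have hInonneg : 0 ≤ ∫ s in Set.Ioc (0:ℝ) m, f s :=
    setIntegral_nonneg measurableSet_Ioc fun s _ => hf_nonneg s
  have hm3 : m ^ 3 ≤ r ^ 2 * R := by
    calc m ^ 3 = m ^ 2 * m := by ring
      _ ≤ r ^ 2 * R := mul_le_mul (pow_le_pow_left₀ hm0 hmr 2) hmR hm0 (sq_nonneg r)
  -- assemble
  have hrpow : γ ^ ((3:ℝ)/2) = γ * Real.sqrt γ := by
    have h32 : (3:ℝ)/2 = 1 + 1/2 := by norm_num
    rw [h32, Real.rpow_add hγ0, Real.rpow_one, Real.sqrt_eq_rpow]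
  have hγpow_pos : 0 < γ ^ ((3:ℝ)/2) := Real.rpow_pos_of_pos hγ0 _
  have hexpneg : Real.exp (-lam r) ≤ 1 := by
    rw [Real.exp_le_one_iff]; simpa using hlam_nonneg r
  rw [radialField, hI]
  rw [abs_mul, abs_mul, abs_mul]
  have hr2 : (0:ℝ) < r ^ 2 := by positivity
  rw [abs_div, abs_of_pos hr2, abs_of_pos hγpow_pos, abs_of_pos (Real.exp_pos _),
    abs_of_nonneg hInonneg]
  have key : |q| / r ^ 2 * γ ^ ((3:ℝ)/2) * Real.exp (-lam r) * ∫ s in Set.Ioc (0:ℝ) m, f s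
      ≤ |q| / r ^ 2 * γ ^ ((3:ℝ)/2) * 1 * (C * (r ^ 2 * R) / 3) := by
    apply mul_le_mul
    · exact mul_le_mul_of_nonneg_left hexpneg (by positivity)
    · calc (∫ s in Set.Ioc (0:ℝ) m, f s) ≤ C * (m ^ 3 / 3) := hIbound
        _ ≤ C * (r ^ 2 * R) / 3 := by
            have h := mul_le_mul_of_nonneg_left hm3 hC0
            calc C * (m ^ 3 / 3) = (C * m ^ 3) / 3 := by ring
              _ ≤ (C * (r ^ 2 * R)) / 3 := by
                  have h3 : (0:ℝ) ≤ 3 := by norm_num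
                  exact div_le_div_of_nonneg_right h h3
              _ = C * (r ^ 2 * R) / 3 := by ring
    · exact hInonneg
    · positivity
  refine key.trans ?_
  have heq : |q| / r ^ 2 * γ ^ ((3:ℝ)/2) * 1 * (C * (r ^ 2 * R) / 3)
      = (|q| * B / 3) * Real.sqrt Q * (γ ^ ((3:ℝ)/2) * R) := by
    field_simp [hC]
    ring
  rw [heq]
  have hfinal : γ ^ ((3:ℝ)/2) * R ≤ (r0 + t) * γ := by
    rw [hrpow, hR]
    have h1 : γ * Real.sqrt γ * (r0 + t / Real.sqrt γ)
        = γ * Real.sqrt γ * r0 + γ * t := by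
      field_simp
    rw [h1]
    have h2 : γ * Real.sqrt γ * r0 ≤ γ * r0 := by
      apply mul_le_mul_of_nonneg_right _ hr0
      nlinarith [Real.sqrt_le_one.mpr hγ1, Real.sqrt_nonneg γ]
    nlinarith
  calc (|q| * B / 3) * Real.sqrt Q * (γ ^ ((3:ℝ)/2) * R)
      ≤ (|q| * B / 3) * Real.sqrt Q * ((r0 + t) * γ) := by
        apply mul_le_mul_of_nonneg_left hfinal (by positivity)
    _ = (|q| * B / 3) * Real.sqrt Q * (r0 + t) * γ := by ring
end
end
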